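/- Let G be a data graph, let e1,…,em be REMs over k registers, let D_⊥ be the set of data values of G together with ⊥, and fix a quantifier rank bound k'. Say a path ρ from u to v satisfies a type 𝓔 ⊆ {e1,…,em} × D_⊥^k × D_⊥^k if for every triple (e_i,λ,λ'), (u,λ,ρ,v,λ') ∈ ⟦e_i⟧_G exactly when (e_i,λ,λ') ∈ 𝓔. Let M_G be the first-order structure whose domain is the disjoint union of the nodes of G, all paths of G, and all k-tuples over D_⊥, with unary relations Nodes, Paths, Registers, ternary relations Endpoints(v,ρ,v') (ρ is a path from v to v') and e_i(λ,ρ,λ') (ρ satisfies (e_i,λ,λ')), and constant ⊥̄ = ⊥^k. Given a tuple ρ̄ of paths, let M'_{G,ρ̄} be the finite substructure whose path elements are the paths of ρ̄ together with, for each pair of nodes (v,v') and each type 𝓔, a set of min(k'+|ρ̄|, number of such paths) arbitrarily chosen distinct paths from v to v' satisfying 𝓔. Then for any tuples v̄ of nodes, ρ̄ of paths and λ̄ of k-tuples over D_⊥, the expanded structures (M_G, v̄, ρ̄, λ̄) and (M'_{G,ρ̄}, v̄, ρ̄, λ̄) satisfy exactly the same first-order sentences of quantifier rank at most k'. -/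

import Mathlib

/-! # Common definitions: data graphs, paths, Turing machines, complexity classes -/

/-- A data graph: nodes `0, …, n-1`, a list of labeled edges `(source, label, target)`
(labels are natural numbers), and a list of data values (`data.getD v 0` is the
data value of node `v`; data values are natural numbers, an infinite domain). -/
structure DataGraph where
  n : ℕ
  edges : List (ℕ × ℕ × ℕ)
  data : List ℕ
deriving DecidableEq

namespace DataGraph

/-- The data value of a node. -/
def val (G : DataGraph) (v : ℕ) : ℕ := G.data.getD v 0

/-- Well-formedness over the alphabet `{0, …, s-1}`. -/
def WF (G : DataGraph) (s : ℕ) : Prop :=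
  (∀ e ∈ G.edges, e.1 < G.n ∧ e.2.1 < s ∧ e.2.2 < G.n) ∧ G.data.length = G.n

/-- Well-formedness, over an arbitrary finite alphabet of labels. -/
def WFAny (G : DataGraph) : Prop :=
  (∀ e ∈ G.edges, e.1 < G.n ∧ e.2.2 < G.n) ∧ G.data.length = G.n

/-- A graph database: the data-value function is injective. -/
def IsDB (G : DataGraph) : Prop :=
  ∀ u v, u < G.n → v < G.n → G.val u = G.val v → u = v

/-- The set of data values occurring in `G`. -/
def dataVals (G : DataGraph) : Set ℕ := {d | ∃ v, v < G.n ∧ G.val v = d}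

end DataGraph

/-- A raw path: a start node together with a list of steps (label, next node). -/
structure RawPath where
  start : ℕ
  steps : List (ℕ × ℕ)
deriving DecidableEq

namespace RawPath

/-- The sequence of nodes along a path. -/
def nodes (ρ : RawPath) : List ℕ := ρ.start :: ρ.steps.map Prod.snd

/-- The final node of a path. -/
def last (ρ : RawPath) : ℕ := (ρ.steps.map Prod.snd).getLastD ρ.start

/-- The number of edges of the path; positions are `0, …, len`. -/
def len (ρ : RawPath) : ℕ := ρ.steps.length

/-- The node at position `i` (0-indexed). -/
def nodeAt (ρ : RawPath) (i : ℕ) : ℕ := ρ.nodes.getD i 0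

/-- The label of the edge between positions `i` and `i+1`. -/
def labelAt (ρ : RawPath) (i : ℕ) : ℕ := (ρ.steps.map Prod.fst).getD i 0

/-- The label of a path: its sequence of edge labels. -/
def label (ρ : RawPath) : List ℕ := ρ.steps.map Prod.fst

/-- Concatenation of two paths (meaningful when `ρ₁.last = ρ₂.start`). -/
def append (ρ₁ ρ₂ : RawPath) : RawPath := ⟨ρ₁.start, ρ₁.steps ++ ρ₂.steps⟩

end RawPath

/-- `ρ` is a path of the data graph `G`. -/
def DataGraph.IsPath (G : DataGraph) (ρ : RawPath) : Prop :=
  ρ.start < G.n ∧ ∀ i, i < ρ.steps.length →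
    (ρ.nodeAt i, ρ.labelAt i, ρ.nodeAt (i + 1)) ∈ G.edges

/-- A concrete encoding of a data graph as a word over `ℕ`. -/
def encodeGraph (G : DataGraph) : List ℕ :=
  G.n :: G.edges.length ::
    (((G.edges.map fun e => [e.1, e.2.1, e.2.2]).foldr (· ++ ·) []) ++
      G.data.length :: G.data)

/-! ## Turing machines and space-bounded computation -/

/-- A deterministic one-tape Turing machine; states and tape symbols coded by `ℕ`
(`0` is the blank symbol).  `δ q a = (q', a', d)`: new state, written symbol,
head direction (`true` = right). -/
structure TMach where
  q0 : ℕ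
  qf : ℕ
  δ : ℕ → ℕ → ℕ × ℕ × Bool

namespace TMach

/-- One computation step on a configuration (state, head, tape). -/
def stepc (M : TMach) (c : ℕ × ℕ × List ℕ) : ℕ × ℕ × List ℕ :=
  let out := M.δ c.1 (c.2.2.getD c.2.1 0)
  (out.1, (if out.2.2 then c.2.1 + 1 else c.2.1 - 1), c.2.2.set c.2.1 out.2.1)

/-- Initial configuration on input `w` with a tape of `m` cells. -/
def initConf (M : TMach) (w : List ℕ) (m : ℕ) : ℕ × ℕ × List ℕ :=
  (M.q0, 0, w ++ List.replicate (m - w.length) 0)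

/-- `M` has an accepting run on input `w` using at most `m` tape cells. -/
def AcceptsWithin (M : TMach) (w : List ℕ) (m : ℕ) : Prop :=
  ∃ k : ℕ, ((M.stepc)^[k] (M.initConf w m)).1 = M.qf ∧
    ∀ j, j ≤ k → ((M.stepc)^[j] (M.initConf w m)).2.1 < m

end TMach

/-- `tower k n`: a tower of exponentials of height `k`;
`tower 1 n = 2 ^ n` and `tower (k+1) n = 2 ^ tower k n`. -/
def tower : ℕ → ℕ → ℕ
  | 0, n => n
  | k + 1, n => 2 ^ tower k n

/-- A decision problem over words on the (infinite, ℕ-coded) alphabet. -/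
abbrev Lang := Set (List ℕ)

/-- `L` is accepted in space `f`. -/
def AcceptedInSpace (f : ℕ → ℕ) (L : Lang) : Prop :=
  ∃ M : TMach, ∀ w, w ∈ L ↔ M.AcceptsWithin w (f w.length)

/-- `k`-EXPSPACE: decidable in space `tower k (p(n))` for some polynomial `p`. -/
def InKExpSpace (k : ℕ) (L : Lang) : Prop :=
  ∃ P : Polynomial ℕ, AcceptedInSpace (fun n => tower k (P.eval n)) L

def InExpSpace (L : Lang) : Prop := InKExpSpace 1 L

def InPSpace (L : Lang) : Prop :=
  ∃ P : Polynomial ℕ, AcceptedInSpace (fun n => P.eval n) L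

/-! ## Polynomial-time reductions (via Mathlib's TM2 model) -/

/-- A finite-alphabet encoding of `List ℕ`. -/
def listNatFinEncoding : Computability.Encoding (List ℕ) Bool where
  encode w := Computability.encodingNatBool.encode (Encodable.encode w)
  decode l := (Computability.encodingNatBool.decode l).bind Encodable.decode
  decode_encode w := by
    rw [Computability.encodingNatBool.decode_encode]
    simp

/-- `f` is computable in polynomial time. -/
def PolyTimeFun (f : List ℕ → List ℕ) : Prop :=
  Nonempty (Turing.TM2ComputableInPolyTime listNatFinEncoding.encode listNatFinEncoding.encode f)

/-- Polynomial-time many-one reducibility. -/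
def ReducesTo (L₁ L₂ : Lang) : Prop :=
  ∃ f : List ℕ → List ℕ, PolyTimeFun f ∧ ∀ w, w ∈ L₁ ↔ f w ∈ L₂

/-! ## Helpers for encodings -/

def encBlock (l : List ℕ) : List ℕ := l.length :: l

def encListL {α : Type} (enc : α → List ℕ) (l : List α) : List ℕ :=
  l.length :: ((l.map fun x => encBlock (enc x)).foldr (· ++ ·) [])

def encPath (ρ : RawPath) : List ℕ :=
  ρ.start :: ρ.steps.length :: ((ρ.steps.map fun s => [s.1, s.2]).foldr (· ++ ·) [])
/-! ## Walk logic (WL) -/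

/-- WL formulas over an ℕ-coded alphabet.  Path variables are naturals; a position
variable is a pair `(p, t)` where `p` is its sort (a path variable) and `t` an index. -/
inductive WL where
  | edge (a : ℕ) (p : ℕ) (t₁ t₂ : ℕ)        -- `E_a(t₁^p, t₂^p)`
  | lt (p : ℕ) (t₁ t₂ : ℕ)                  -- `t₁^p < t₂^p`
  | sim (p₁ t₁ p₂ t₂ : ℕ)                   -- `t₁^{p₁} ∼ t₂^{p₂}`
  | not (φ : WL)
  | or (φ ψ : WL)
  | exPos (p t : ℕ) (φ : WL)                -- `∃ t^p`
  | exPath (p : ℕ) (φ : WL)                 -- `∃ p`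

namespace WL

/-- Satisfaction of WL formulas in a data graph, under an assignment of paths to
path variables and of positions to position variables. -/
def Sat (G : DataGraph) : WL → (ℕ → RawPath) → (ℕ × ℕ → ℕ) → Prop
  | .edge a p t₁ t₂, αp, αt =>
      αt (p, t₂) = αt (p, t₁) + 1 ∧ αt (p, t₁) < (αp p).len ∧
        (αp p).labelAt (αt (p, t₁)) = a
  | .lt p t₁ t₂, _, αt => αt (p, t₁) < αt (p, t₂)
  | .sim p₁ t₁ p₂ t₂, αp, αt =>
      G.val ((αp p₁).nodeAt (αt (p₁, t₁))) = G.val ((αp p₂).nodeAt (αt (p₂, t₂)))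
  | .not φ, αp, αt => ¬ Sat G φ αp αt
  | .or φ ψ, αp, αt => Sat G φ αp αt ∨ Sat G ψ αp αt
  | .exPos p t φ, αp, αt =>
      ∃ i, i ≤ (αp p).len ∧ Sat G φ αp (Function.update αt (p, t) i)
  | .exPath p φ, αp, αt => ∃ ρ, G.IsPath ρ ∧ Sat G φ (Function.update αp p ρ) αt

/-- Truth of a Boolean (closed) WL formula in `G`. -/
def holds (G : DataGraph) (φ : WL) : Prop :=
  Sat G φ (fun _ => ⟨0, []⟩) (fun _ => 0)

/-- Free position variables. -/
def freePos : WL → Finset (ℕ × ℕ)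
  | .edge _ p t₁ t₂ => {(p, t₁), (p, t₂)}
  | .lt p t₁ t₂ => {(p, t₁), (p, t₂)}
  | .sim p₁ t₁ p₂ t₂ => {(p₁, t₁), (p₂, t₂)}
  | .not φ => freePos φ
  | .or φ ψ => freePos φ ∪ freePos ψ
  | .exPos p t φ => (freePos φ).erase (p, t)
  | .exPath p φ => (freePos φ).filter (fun v => v.1 ≠ p)

/-- Free path variables. -/
def freePath : WL → Finset ℕ
  | .edge _ p _ _ => {p}
  | .lt p _ _ => {p}
  | .sim p₁ _ p₂ _ => {p₁, p₂}
  | .not φ => freePath φ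
  | .or φ ψ => freePath φ ∪ freePath ψ
  | .exPos p _ φ => insert p (freePath φ)
  | .exPath p φ => (freePath φ).erase p

/-- A Boolean WL formula: no free variables. -/
def Closed (φ : WL) : Prop := freePos φ = ∅ ∧ freePath φ = ∅

/-- Labels appearing in a WL formula (its alphabet). -/
def labels : WL → Finset ℕ
  | .edge a _ _ _ => {a}
  | .lt _ _ _ => ∅
  | .sim _ _ _ _ => ∅
  | .not φ => labels φ
  | .or φ ψ => labels φ ∪ labels ψ
  | .exPos _ _ φ => labels φ
  | .exPath _ φ => labels φ

/-- The formula contains no path quantification. -/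
def NoPathQuant : WL → Prop
  | .not φ => NoPathQuant φ
  | .or φ ψ => NoPathQuant φ ∧ NoPathQuant ψ
  | .exPos _ _ φ => NoPathQuant φ
  | .exPath _ _ => False
  | _ => True

/-- All position variables of the formula are of sort `p`. -/
def OnlySort (p : ℕ) : WL → Prop
  | .edge _ q _ _ => q = p
  | .lt q _ _ => q = p
  | .sim q₁ _ q₂ _ => q₁ = p ∧ q₂ = p
  | .not φ => OnlySort p φ
  | .or φ ψ => OnlySort p φ ∧ OnlySort p ψ
  | .exPos q _ φ => q = p ∧ OnlySort p φ
  | .exPath _ φ => OnlySort p φ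

end WL

/-- The evaluation problem `Eval(WL, φ)` for a fixed Boolean WL formula `φ` over the
alphabet `{0, …, s-1}`, as a language of encodings of data graphs. -/
def evalWL (s : ℕ) (φ : WL) : Lang :=
  {w | ∃ G : DataGraph, w = encodeGraph G ∧ G.WF s ∧ WL.holds G φ}
/-! ## Regular expressions with memory (REM) and register logic (RL) -/

/-- Conditions over registers (registers are ℕ-indexed). -/
inductive RCond where
  | eq (i : ℕ)                       -- `r_i^=`
  | and (c₁ c₂ : RCond)
  | not (c : RCond)

/-- A register assignment: `none` is `⊥`. -/
abbrev RAsg := ℕ → Option ℕ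

def botAsg : RAsg := fun _ => none

/-- Satisfaction of a condition by the current data value `d` and registers `lam`. -/
def RCond.CSat (d : ℕ) (lam : RAsg) : RCond → Prop
  | .eq i => lam i = some d
  | .and c₁ c₂ => RCond.CSat d lam c₁ ∧ RCond.CSat d lam c₂
  | .not c => ¬ RCond.CSat d lam c

/-- Registers mentioned in a condition. -/
def RCond.regs : RCond → Finset ℕ
  | .eq i => {i}
  | .and c₁ c₂ => c₁.regs ∪ c₂.regs
  | .not c => c.regs

/-- Regular expressions with memory over an ℕ-coded alphabet and ℕ-indexed registers. -/
inductive REM where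
  | eps
  | lab (a : ℕ)
  | union (e₁ e₂ : REM)
  | concat (e₁ e₂ : REM)
  | plus (e : REM)
  | test (e : REM) (c : RCond)       -- `e[c]`
  | store (rs : List ℕ) (e : REM)    -- `↓r̄. e`

/-- `e* := ε ∪ e⁺`. -/
def REM.star (e : REM) : REM := .union .eps (.plus e)

def setRegs (lam : RAsg) (rs : List ℕ) (d : ℕ) : RAsg :=
  fun i => if i ∈ rs then some d else lam i

/-- Semantics of REMs: `REMSem G e ρ lam lam'` holds iff the path `ρ` (from `ρ.start` to
`ρ.last`) can be parsed according to `e`, transforming register assignment `lam`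
into `lam'`. -/
inductive REMSem (G : DataGraph) : REM → RawPath → RAsg → RAsg → Prop
  | eps (u : ℕ) (hu : u < G.n) (lam : RAsg) : REMSem G .eps ⟨u, []⟩ lam lam
  | lab (u a v : ℕ) (h : (u, a, v) ∈ G.edges) (lam : RAsg) :
      REMSem G (.lab a) ⟨u, [(a, v)]⟩ lam lam
  | unionL {e₁ e₂ ρ lam lam'} : REMSem G e₁ ρ lam lam' → REMSem G (.union e₁ e₂) ρ lam lam'
  | unionR {e₁ e₂ ρ lam lam'} : REMSem G e₂ ρ lam lam' → REMSem G (.union e₁ e₂) ρ lam lam'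
  | concat {e₁ e₂ ρ₁ ρ₂ lam lam₁ lam'} :
      REMSem G e₁ ρ₁ lam lam₁ → REMSem G e₂ ρ₂ lam₁ lam' → ρ₁.last = ρ₂.start →
      REMSem G (.concat e₁ e₂) (ρ₁.append ρ₂) lam lam'
  | plusOne {e ρ lam lam'} : REMSem G e ρ lam lam' → REMSem G (.plus e) ρ lam lam'
  | plusStep {e ρ₁ ρ₂ lam lam₁ lam'} :
      REMSem G e ρ₁ lam lam₁ → REMSem G (.plus e) ρ₂ lam₁ lam' → ρ₁.last = ρ₂.start →
      REMSem G (.plus e) (ρ₁.append ρ₂) lam lam'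
  | test {e c ρ lam lam'} :
      REMSem G e ρ lam lam' → RCond.CSat (G.val ρ.last) lam' c →
      REMSem G (.test e c) ρ lam lam'
  | store {rs e ρ lam lam'} :
      REMSem G e ρ (setRegs lam rs (G.val ρ.start)) lam' →
      REMSem G (.store rs e) ρ lam lam'

def REM.labels : REM → Finset ℕ
  | .eps => ∅
  | .lab a => {a}
  | .union e₁ e₂ => e₁.labels ∪ e₂.labels
  | .concat e₁ e₂ => e₁.labels ∪ e₂.labels
  | .plus e => e.labels
  | .test e _ => e.labels
  | .store _ e => e.labels

def REM.regs : REM → Finset ℕ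
  | .eps => ∅
  | .lab _ => ∅
  | .union e₁ e₂ => e₁.regs ∪ e₂.regs
  | .concat e₁ e₂ => e₁.regs ∪ e₂.regs
  | .plus e => e.regs
  | .test e c => e.regs ∪ c.regs
  | .store rs e => rs.toFinset ∪ e.regs

/-- A term denoting a register assignment: a register-assignment variable or `⊥̄`. -/
inductive RegTerm where
  | var (v : ℕ)
  | bot

def RegTerm.interp (αr : ℕ → RAsg) : RegTerm → RAsg
  | .var v => αr v
  | .bot => botAsg

def RegTerm.fv : RegTerm → Finset ℕ
  | .var v => {v}
  | .bot => ∅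

/-- Register logic (RL). -/
inductive RL where
  | nodeEq (x y : ℕ)                            -- `x = y`
  | pathEq (p q : ℕ)                            -- `π = π'`
  | regEq (t₁ t₂ : RegTerm)                     -- `ν = ν'`, `ν = ⊥̄`
  | ends (x p y : ℕ)                            -- `(x, π, y)`
  | rem (e : REM) (p : ℕ) (t₁ t₂ : RegTerm)     -- `e(π, ν₁, ν₂)`
  | not (φ : RL)
  | or (φ ψ : RL)
  | exNode (x : ℕ) (φ : RL)
  | exPath (p : ℕ) (φ : RL)
  | exReg (v : ℕ) (φ : RL)

/-- A valid register value for the logic with `k` registers over `G`: registers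
`≥ k` are empty and stored data values occur in `G`. -/
def ValidAsg (G : DataGraph) (k : ℕ) (lam : RAsg) : Prop :=
  (∀ i, k ≤ i → lam i = none) ∧ ∀ i d, lam i = some d → d ∈ G.dataVals

namespace RL

/-- Satisfaction of RL formulas (with `k` registers) under assignments of nodes,
paths and register values to the three kinds of variables. -/
def Sat (G : DataGraph) (k : ℕ) : RL → (ℕ → ℕ) → (ℕ → RawPath) → (ℕ → RAsg) → Prop
  | .nodeEq x y, αn, _, _ => αn x = αn y
  | .pathEq p q, _, αp, _ => αp p = αp q
  | .regEq t₁ t₂, _, _, αr => t₁.interp αr = t₂.interp αr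
  | .ends x p y, αn, αp, _ => (αp p).start = αn x ∧ (αp p).last = αn y
  | .rem e p t₁ t₂, _, αp, αr => REMSem G e (αp p) (t₁.interp αr) (t₂.interp αr)
  | .not φ, αn, αp, αr => ¬ Sat G k φ αn αp αr
  | .or φ ψ, αn, αp, αr => Sat G k φ αn αp αr ∨ Sat G k ψ αn αp αr
  | .exNode x φ, αn, αp, αr => ∃ u, u < G.n ∧ Sat G k φ (Function.update αn x u) αp αr
  | .exPath p φ, αn, αp, αr => ∃ ρ, G.IsPath ρ ∧ Sat G k φ αn (Function.update αp p ρ) αr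
  | .exReg v φ, αn, αp, αr =>
      ∃ lam, ValidAsg G k lam ∧ Sat G k φ αn αp (Function.update αr v lam)

/-- Truth of a closed RL formula in `G`. -/
def holds (G : DataGraph) (k : ℕ) (φ : RL) : Prop :=
  Sat G k φ (fun _ => 0) (fun _ => ⟨0, []⟩) (fun _ => botAsg)

def freeNode : RL → Finset ℕ
  | .nodeEq x y => {x, y}
  | .pathEq _ _ => ∅
  | .regEq _ _ => ∅
  | .ends x _ y => {x, y}
  | .rem _ _ _ _ => ∅
  | .not φ => freeNode φ
  | .or φ ψ => freeNode φ ∪ freeNode ψ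
  | .exNode x φ => (freeNode φ).erase x
  | .exPath _ φ => freeNode φ
  | .exReg _ φ => freeNode φ

def freePath : RL → Finset ℕ
  | .nodeEq _ _ => ∅
  | .pathEq p q => {p, q}
  | .regEq _ _ => ∅
  | .ends _ p _ => {p}
  | .rem _ p _ _ => {p}
  | .not φ => freePath φ
  | .or φ ψ => freePath φ ∪ freePath ψ
  | .exNode _ φ => freePath φ
  | .exPath p φ => (freePath φ).erase p
  | .exReg _ φ => freePath φ

def freeReg : RL → Finset ℕ
  | .nodeEq _ _ => ∅
  | .pathEq _ _ => ∅
  | .regEq t₁ t₂ => t₁.fv ∪ t₂.fv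
  | .ends _ _ _ => ∅
  | .rem _ _ t₁ t₂ => t₁.fv ∪ t₂.fv
  | .not φ => freeReg φ
  | .or φ ψ => freeReg φ ∪ freeReg ψ
  | .exNode _ φ => freeReg φ
  | .exPath _ φ => freeReg φ
  | .exReg v φ => (freeReg φ).erase v

/-- A closed RL formula (sentence). -/
def ClosedF (φ : RL) : Prop := freeNode φ = ∅ ∧ freePath φ = ∅ ∧ freeReg φ = ∅

def labels : RL → Finset ℕ
  | .rem e _ _ _ => e.labels
  | .not φ => labels φ
  | .or φ ψ => labels φ ∪ labels ψ
  | .exNode _ φ => labels φ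
  | .exPath _ φ => labels φ
  | .exReg _ φ => labels φ
  | _ => ∅

def regs : RL → Finset ℕ
  | .rem e _ _ _ => e.regs
  | .not φ => regs φ
  | .or φ ψ => regs φ ∪ regs ψ
  | .exNode _ φ => regs φ
  | .exPath _ φ => regs φ
  | .exReg _ φ => regs φ
  | _ => ∅

/-- The formula contains no path quantification. -/
def NoPathQuant : RL → Prop
  | .not φ => NoPathQuant φ
  | .or φ ψ => NoPathQuant φ ∧ NoPathQuant ψ
  | .exNode _ φ => NoPathQuant φ
  | .exReg _ φ => NoPathQuant φ
  | .exPath _ _ => False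
  | _ => True

/-- Derived conjunction. -/
def and (φ ψ : RL) : RL := .not (.or (.not φ) (.not ψ))

/-- Derived implication. -/
def imp (φ ψ : RL) : RL := .or (.not φ) ψ

/-- Derived universal quantification over register assignments. -/
def allReg (v : ℕ) (φ : RL) : RL := .not (.exReg v (.not φ))

end RL
/-! ## Positive fragment RL⁺, nested REMs, and NRL⁺ -/

/-- The positive fragment RL⁺ of register logic. -/
inductive RLPos where
  | nodeEq (x y : ℕ)
  | pathEq (p q : ℕ)
  | regEq (t₁ t₂ : RegTerm)
  | ends (x p y : ℕ)
  | rem (e : REM) (p : ℕ) (t₁ t₂ : RegTerm)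
  | or (φ ψ : RLPos)
  | and (φ ψ : RLPos)
  | exNode (x : ℕ) (φ : RLPos)
  | exPath (p : ℕ) (φ : RLPos)
  | exReg (v : ℕ) (φ : RLPos)

namespace RLPos

def Sat (G : DataGraph) (k : ℕ) : RLPos → (ℕ → ℕ) → (ℕ → RawPath) → (ℕ → RAsg) → Prop
  | .nodeEq x y, αn, _, _ => αn x = αn y
  | .pathEq p q, _, αp, _ => αp p = αp q
  | .regEq t₁ t₂, _, _, αr => t₁.interp αr = t₂.interp αr
  | .ends x p y, αn, αp, _ => (αp p).start = αn x ∧ (αp p).last = αn y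
  | .rem e p t₁ t₂, _, αp, αr => REMSem G e (αp p) (t₁.interp αr) (t₂.interp αr)
  | .or φ ψ, αn, αp, αr => Sat G k φ αn αp αr ∨ Sat G k ψ αn αp αr
  | .and φ ψ, αn, αp, αr => Sat G k φ αn αp αr ∧ Sat G k ψ αn αp αr
  | .exNode x φ, αn, αp, αr => ∃ u, u < G.n ∧ Sat G k φ (Function.update αn x u) αp αr
  | .exPath p φ, αn, αp, αr => ∃ ρ, G.IsPath ρ ∧ Sat G k φ αn (Function.update αp p ρ) αr
  | .exReg v φ, αn, αp, αr =>
      ∃ lam, ValidAsg G k lam ∧ Sat G k φ αn αp (Function.update αr v lam)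

def freeNode : RLPos → Finset ℕ
  | .nodeEq x y => {x, y}
  | .pathEq _ _ => ∅
  | .regEq _ _ => ∅
  | .ends x _ y => {x, y}
  | .rem _ _ _ _ => ∅
  | .or φ ψ => freeNode φ ∪ freeNode ψ
  | .and φ ψ => freeNode φ ∪ freeNode ψ
  | .exNode x φ => (freeNode φ).erase x
  | .exPath _ φ => freeNode φ
  | .exReg _ φ => freeNode φ

def freePath : RLPos → Finset ℕ
  | .nodeEq _ _ => ∅
  | .pathEq p q => {p, q}
  | .regEq _ _ => ∅
  | .ends _ p _ => {p}
  | .rem _ p _ _ => {p}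
  | .or φ ψ => freePath φ ∪ freePath ψ
  | .and φ ψ => freePath φ ∪ freePath ψ
  | .exNode _ φ => freePath φ
  | .exPath p φ => (freePath φ).erase p
  | .exReg _ φ => freePath φ

def freeReg : RLPos → Finset ℕ
  | .regEq t₁ t₂ => t₁.fv ∪ t₂.fv
  | .rem _ _ t₁ t₂ => t₁.fv ∪ t₂.fv
  | .or φ ψ => freeReg φ ∪ freeReg ψ
  | .and φ ψ => freeReg φ ∪ freeReg ψ
  | .exNode _ φ => freeReg φ
  | .exPath _ φ => freeReg φ
  | .exReg v φ => (freeReg φ).erase v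
  | _ => ∅

def labels : RLPos → Finset ℕ
  | .rem e _ _ _ => e.labels
  | .or φ ψ => labels φ ∪ labels ψ
  | .and φ ψ => labels φ ∪ labels ψ
  | .exNode _ φ => labels φ
  | .exPath _ φ => labels φ
  | .exReg _ φ => labels φ
  | _ => ∅

end RLPos

/-- Nested regular expressions with memory (NREM): REMs plus the nesting operator `⟨e⟩`. -/
inductive NREM where
  | eps
  | lab (a : ℕ)
  | union (e₁ e₂ : NREM)
  | concat (e₁ e₂ : NREM)
  | plus (e : NREM)
  | test (e : NREM) (c : RCond)
  | store (rs : List ℕ) (e : NREM)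
  | nest (e : NREM)                  -- `⟨e⟩`

def NREM.star (e : NREM) : NREM := .union .eps (.plus e)

/-- Semantics of NREMs. -/
inductive NREMSem (G : DataGraph) : NREM → RawPath → RAsg → RAsg → Prop
  | eps (u : ℕ) (hu : u < G.n) (lam : RAsg) : NREMSem G .eps ⟨u, []⟩ lam lam
  | lab (u a v : ℕ) (h : (u, a, v) ∈ G.edges) (lam : RAsg) :
      NREMSem G (.lab a) ⟨u, [(a, v)]⟩ lam lam
  | unionL {e₁ e₂ ρ lam lam'} : NREMSem G e₁ ρ lam lam' → NREMSem G (.union e₁ e₂) ρ lam lam'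
  | unionR {e₁ e₂ ρ lam lam'} : NREMSem G e₂ ρ lam lam' → NREMSem G (.union e₁ e₂) ρ lam lam'
  | concat {e₁ e₂ ρ₁ ρ₂ lam lam₁ lam'} :
      NREMSem G e₁ ρ₁ lam lam₁ → NREMSem G e₂ ρ₂ lam₁ lam' → ρ₁.last = ρ₂.start →
      NREMSem G (.concat e₁ e₂) (ρ₁.append ρ₂) lam lam'
  | plusOne {e ρ lam lam'} : NREMSem G e ρ lam lam' → NREMSem G (.plus e) ρ lam lam'
  | plusStep {e ρ₁ ρ₂ lam lam₁ lam'} :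
      NREMSem G e ρ₁ lam lam₁ → NREMSem G (.plus e) ρ₂ lam₁ lam' → ρ₁.last = ρ₂.start →
      NREMSem G (.plus e) (ρ₁.append ρ₂) lam lam'
  | test {e c ρ lam lam'} :
      NREMSem G e ρ lam lam' → RCond.CSat (G.val ρ.last) lam' c →
      NREMSem G (.test e c) ρ lam lam'
  | store {rs e ρ lam lam'} :
      NREMSem G e ρ (setRegs lam rs (G.val ρ.start)) lam' →
      NREMSem G (.store rs e) ρ lam lam'
  | nest {e ρ' lam lam'} :
      NREMSem G e ρ' lam lam' → NREMSem G (.nest e) ⟨ρ'.start, []⟩ lam lam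

/-- NRL⁺: the positive fragment of register logic with nested REMs in its atoms. -/
inductive NRLPos where
  | nodeEq (x y : ℕ)
  | pathEq (p q : ℕ)
  | regEq (t₁ t₂ : RegTerm)
  | ends (x p y : ℕ)
  | rem (e : NREM) (p : ℕ) (t₁ t₂ : RegTerm)
  | or (φ ψ : NRLPos)
  | and (φ ψ : NRLPos)
  | exNode (x : ℕ) (φ : NRLPos)
  | exPath (p : ℕ) (φ : NRLPos)
  | exReg (v : ℕ) (φ : NRLPos)

namespace NRLPos

def Sat (G : DataGraph) (k : ℕ) : NRLPos → (ℕ → ℕ) → (ℕ → RawPath) → (ℕ → RAsg) → Prop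
  | .nodeEq x y, αn, _, _ => αn x = αn y
  | .pathEq p q, _, αp, _ => αp p = αp q
  | .regEq t₁ t₂, _, _, αr => t₁.interp αr = t₂.interp αr
  | .ends x p y, αn, αp, _ => (αp p).start = αn x ∧ (αp p).last = αn y
  | .rem e p t₁ t₂, _, αp, αr => NREMSem G e (αp p) (t₁.interp αr) (t₂.interp αr)
  | .or φ ψ, αn, αp, αr => Sat G k φ αn αp αr ∨ Sat G k ψ αn αp αr
  | .and φ ψ, αn, αp, αr => Sat G k φ αn αp αr ∧ Sat G k ψ αn αp αr
  | .exNode x φ, αn, αp, αr => ∃ u, u < G.n ∧ Sat G k φ (Function.update αn x u) αp αr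
  | .exPath p φ, αn, αp, αr => ∃ ρ, G.IsPath ρ ∧ Sat G k φ αn (Function.update αp p ρ) αr
  | .exReg v φ, αn, αp, αr =>
      ∃ lam, ValidAsg G k lam ∧ Sat G k φ αn αp (Function.update αr v lam)

end NRLPos

/-! ## Nondeterministic log-space machines (read-only input tape, bounded work tape) -/

/-- A nondeterministic Turing machine with a read-only input tape and a work tape.
`δ q a b` (state, input symbol, work symbol) yields a list of possible moves
(new state, written work symbol, input head direction, work head direction);
`true` = right. -/
structure NTM where
  q0 : ℕ
  qf : ℕ
  δ : ℕ → ℕ → ℕ → List (ℕ × ℕ × Bool × Bool)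

structure NConf where
  q : ℕ
  ih : ℕ
  wh : ℕ
  work : List ℕ
deriving DecidableEq

def NTM.nstep (M : NTM) (w : List ℕ) (c c' : NConf) : Prop :=
  ∃ t ∈ M.δ c.q (w.getD c.ih 0) (c.work.getD c.wh 0),
    c'.q = t.1 ∧ c'.work = c.work.set c.wh t.2.1 ∧
    c'.ih = (if t.2.2.1 then c.ih + 1 else c.ih - 1) ∧
    c'.wh = (if t.2.2.2 then c.wh + 1 else c.wh - 1)

/-- `M` accepts `w` using at most `m` work-tape cells. -/
def NTM.Accepts (M : NTM) (w : List ℕ) (m : ℕ) : Prop :=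
  ∃ c : NConf, Relation.ReflTransGen (fun a b => M.nstep w a b ∧ b.wh < m)
      ⟨M.q0, 0, 0, List.replicate m 0⟩ c ∧ c.q = M.qf

/-- Nondeterministic logarithmic space. -/
def InNLogSpace (L : Lang) : Prop :=
  ∃ (cst : ℕ) (M : NTM), ∀ w, w ∈ L ↔ M.Accepts w (cst * (Nat.log 2 w.length + 1) + cst)
/-! ## Encodings of formulas and inputs -/

def encRegTerm : RegTerm → List ℕ
  | .var v => [0, v]
  | .bot => [1]

def encRCond : RCond → List ℕ
  | .eq i => [0, i]
  | .and c₁ c₂ => 1 :: (encRCond c₁ ++ encRCond c₂)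
  | .not c => 2 :: encRCond c

def encREM : REM → List ℕ
  | .eps => [0]
  | .lab a => [1, a]
  | .union e₁ e₂ => 2 :: (encREM e₁ ++ encREM e₂)
  | .concat e₁ e₂ => 3 :: (encREM e₁ ++ encREM e₂)
  | .plus e => 4 :: encREM e
  | .test e c => 5 :: (encREM e ++ encRCond c)
  | .store rs e => 6 :: rs.length :: (rs ++ encREM e)

def encRL : RL → List ℕ
  | .nodeEq x y => [0, x, y]
  | .pathEq p q => [1, p, q]
  | .regEq t₁ t₂ => 2 :: (encRegTerm t₁ ++ encRegTerm t₂)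
  | .ends x p y => [3, x, p, y]
  | .rem e p t₁ t₂ => 4 :: p :: (encREM e ++ encRegTerm t₁ ++ encRegTerm t₂)
  | .not φ => 5 :: encRL φ
  | .or φ ψ => 6 :: (encRL φ ++ encRL ψ)
  | .exNode x φ => 7 :: x :: encRL φ
  | .exPath p φ => 8 :: p :: encRL φ
  | .exReg v φ => 9 :: v :: encRL φ

def encNREM : NREM → List ℕ
  | .eps => [0]
  | .lab a => [1, a]
  | .union e₁ e₂ => 2 :: (encNREM e₁ ++ encNREM e₂)
  | .concat e₁ e₂ => 3 :: (encNREM e₁ ++ encNREM e₂)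
  | .plus e => 4 :: encNREM e
  | .test e c => 5 :: (encNREM e ++ encRCond c)
  | .store rs e => 6 :: rs.length :: (rs ++ encNREM e)
  | .nest e => 7 :: encNREM e

def encNRLPos : NRLPos → List ℕ
  | .nodeEq x y => [0, x, y]
  | .pathEq p q => [1, p, q]
  | .regEq t₁ t₂ => 2 :: (encRegTerm t₁ ++ encRegTerm t₂)
  | .ends x p y => [3, x, p, y]
  | .rem e p t₁ t₂ => 4 :: p :: (encNREM e ++ encRegTerm t₁ ++ encRegTerm t₂)
  | .or φ ψ => 6 :: (encNRLPos φ ++ encNRLPos ψ)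
  | .and φ ψ => 10 :: (encNRLPos φ ++ encNRLPos ψ)
  | .exNode x φ => 7 :: x :: encNRLPos φ
  | .exPath p φ => 8 :: p :: encNRLPos φ
  | .exReg v φ => 9 :: v :: encNRLPos φ

/-- Decoding a list into a register assignment: entry `0` is `⊥`, entry `d+1` is value `d`. -/
def regOfList (l : List ℕ) : RAsg := fun i =>
  match l.getD i 0 with
  | 0 => none
  | d + 1 => some d

/-- Validity of list-coded assignments (to node, path, and register-assignment
variables) over `G`, for the logic with `k` registers. -/
def AsgListsValid (G : DataGraph) (k : ℕ) (ns : List ℕ) (ps : List RawPath)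
    (rs : List (List ℕ)) : Prop :=
  (∀ x ∈ ns, x < G.n) ∧ (∀ ρ ∈ ps, G.IsPath ρ) ∧ (∀ l ∈ rs, ValidAsg G k (regOfList l))

/-- Encoding of an input (data graph plus list-coded assignment). -/
def encInputAsg (G : DataGraph) (ns : List ℕ) (ps : List RawPath)
    (rs : List (List ℕ)) : List ℕ :=
  encBlock (encodeGraph G) ++ encBlock (encListL (fun x => [x]) ns) ++
    encBlock (encListL encPath ps) ++ encBlock (encListL id rs)

/-- The evaluation problem for a fixed RL formula `φ` with `k` registers
(data complexity): inputs are a data graph together with an assignment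
for the (free) variables of `φ`. -/
def evalRLFixed (k : ℕ) (φ : RL) : Lang :=
  {w | ∃ (G : DataGraph) (ns : List ℕ) (ps : List RawPath) (rs : List (List ℕ)),
      w = encInputAsg G ns ps rs ∧ G.WFAny ∧ AsgListsValid G k ns ps rs ∧
      RL.Sat G k φ (fun x => ns.getD x 0) (fun p => ps.getD p ⟨0, []⟩)
        (fun v => regOfList (rs.getD v []))}

/-- The evaluation problem for a fixed closed RL formula (data complexity). -/
def evalRLSentence (k : ℕ) (φ : RL) : Lang :=
  {w | ∃ G : DataGraph, w = encodeGraph G ∧ G.WFAny ∧ RL.holds G k φ}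

/-- Encoding of an input for the combined evaluation problem for RL. -/
def encInputRL (k : ℕ) (G : DataGraph) (φ : RL) (ns : List ℕ) (ps : List RawPath)
    (rs : List (List ℕ)) : List ℕ :=
  k :: encBlock (encRL φ) ++ encInputAsg G ns ps rs

/-- The (combined) evaluation problem for register logic, `Eval(RL)`. -/
def evalRLComb : Lang :=
  {w | ∃ (k : ℕ) (G : DataGraph) (φ : RL) (ns : List ℕ) (ps : List RawPath)
      (rs : List (List ℕ)),
      w = encInputRL k G φ ns ps rs ∧ G.WFAny ∧ AsgListsValid G k ns ps rs ∧
      RL.Sat G k φ (fun x => ns.getD x 0) (fun p => ps.getD p ⟨0, []⟩)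
        (fun v => regOfList (rs.getD v []))}

/-- The evaluation problem for a fixed RL⁺ formula (data complexity). -/
def evalRLPosFixed (k : ℕ) (φ : RLPos) : Lang :=
  {w | ∃ (G : DataGraph) (ns : List ℕ) (ps : List RawPath) (rs : List (List ℕ)),
      w = encInputAsg G ns ps rs ∧ G.WFAny ∧ AsgListsValid G k ns ps rs ∧
      RLPos.Sat G k φ (fun x => ns.getD x 0) (fun p => ps.getD p ⟨0, []⟩)
        (fun v => regOfList (rs.getD v []))}

/-- The evaluation problem for a fixed NRL⁺ formula (data complexity). -/
def evalNRLPosFixed (k : ℕ) (φ : NRLPos) : Lang :=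
  {w | ∃ (G : DataGraph) (ns : List ℕ) (ps : List RawPath) (rs : List (List ℕ)),
      w = encInputAsg G ns ps rs ∧ G.WFAny ∧ AsgListsValid G k ns ps rs ∧
      NRLPos.Sat G k φ (fun x => ns.getD x 0) (fun p => ps.getD p ⟨0, []⟩)
        (fun v => regOfList (rs.getD v []))}

/-- Encoding of an input for the combined evaluation problem for NRL⁺. -/
def encInputNRLPos (k : ℕ) (G : DataGraph) (φ : NRLPos) (ns : List ℕ)
    (ps : List RawPath) (rs : List (List ℕ)) : List ℕ :=
  k :: encBlock (encNRLPos φ) ++ encInputAsg G ns ps rs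

/-- The combined evaluation problem for NRL⁺. -/
def evalNRLPosComb : Lang :=
  {w | ∃ (k : ℕ) (G : DataGraph) (φ : NRLPos) (ns : List ℕ) (ps : List RawPath)
      (rs : List (List ℕ)),
      w = encInputNRLPos k G φ ns ps rs ∧ G.WFAny ∧ AsgListsValid G k ns ps rs ∧
      NRLPos.Sat G k φ (fun x => ns.getD x 0) (fun p => ps.getD p ⟨0, []⟩)
        (fun v => regOfList (rs.getD v []))}

/-! ## Some graph-theoretic queries -/

/-- The query (Q): there are a node `z` and a path from `u` to `v` in which
every node is connected to `z` (by some path). -/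
def QueryQ (G : DataGraph) (u v : ℕ) : Prop :=
  ∃ z, z < G.n ∧ ∃ ρ : RawPath, G.IsPath ρ ∧ ρ.start = u ∧ ρ.last = v ∧
    ∀ x ∈ ρ.nodes, ∃ ρ' : RawPath, G.IsPath ρ' ∧ ρ'.start = x ∧ ρ'.last = z

/-- `G` has a Hamiltonian path: a path visiting every node exactly once. -/
def HamPath (G : DataGraph) : Prop :=
  ∃ ρ : RawPath, G.IsPath ρ ∧ ρ.nodes.Nodup ∧ ∀ v, v < G.n → v ∈ ρ.nodes

/-- `G` (as a representation of an undirected graph) is bipartite. -/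
def Bipartite (G : DataGraph) : Prop :=
  ∃ S₁ S₂ : Set ℕ, (∀ v, v < G.n → ((v ∈ S₁ ∨ v ∈ S₂) ∧ ¬(v ∈ S₁ ∧ v ∈ S₂))) ∧
    ∀ e ∈ G.edges, (e.1 ∈ S₁ ∧ e.2.2 ∈ S₂) ∨ (e.1 ∈ S₂ ∧ e.2.2 ∈ S₁)

/-- `G` contains a cycle of odd length. -/
def HasOddCycle (G : DataGraph) : Prop :=
  ∃ ρ : RawPath, G.IsPath ρ ∧ Odd ρ.steps.length ∧ ρ.last = ρ.start

/-- Isomorphism of data graphs (preserving edges and equalities of data values). -/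
def GraphIso (G G' : DataGraph) : Prop :=
  G.n = G'.n ∧ ∃ f : ℕ → ℕ, Set.BijOn f (Set.Iio G.n) (Set.Iio G'.n) ∧
    (∀ u a v, u < G.n → v < G.n → ((u, a, v) ∈ G.edges ↔ (f u, a, f v) ∈ G'.edges)) ∧
    (∀ u v, u < G.n → v < G.n → (G.val u = G.val v ↔ G'.val (f u) = G'.val (f v)))

/-- A Boolean query: an isomorphism-closed class of graph databases. -/
def IsoClosed (Q : Set DataGraph) : Prop :=
  ∀ G G', GraphIso G G' → (G ∈ Q ↔ G' ∈ Q)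
/-! ## Counters and descriptions -/

/-- `Σ_k = {a_k, b_k}`, coded as `a_k = 2k` (representing 0) and `b_k = 2k+1`
(representing 1). -/
def sigmaAlph (k : ℕ) : Finset ℕ := {2 * k, 2 * k + 1}

/-- `Γ_k = Σ_1 ∪ ⋯ ∪ Σ_k`. -/
def gammaAlph (k : ℕ) : Finset ℕ := (Finset.range k).biUnion (fun i => sigmaAlph (i + 1))

/-- The number represented by a word over some `Σ_k` (`a_k ↦ 0`, `b_k ↦ 1`),
least significant bit first. -/
def bitsVal (w : List ℕ) : ℕ := ((w.zipIdx.map Prod.swap).map (fun x => (x.2 % 2) * 2 ^ x.1)).sum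

/-- `SeqDesc Cnt Letter p j w ds`: `w` is a sequence `σ_p d_p ⋯ σ_j d_j` where
`Cnt i σ_i` holds for each `i`, each `d_i` satisfies `Letter`, and `ds = [d_p, …, d_j]`. -/
def SeqDesc (Cnt : ℕ → List ℕ → Prop) (Letter : ℕ → Prop) (p j : ℕ)
    (w : List ℕ) (ds : List ℕ) : Prop :=
  ∃ σs : List (List ℕ),
    σs.length = j + 1 - p ∧ ds.length = j + 1 - p ∧
    (∀ i, i < σs.length → Cnt (p + i) (σs.getD i [])) ∧
    (∀ d ∈ ds, Letter d) ∧
    w = (List.zipWith (fun σ d => σ ++ [d]) σs ds).foldr (· ++ ·) []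

/-- `IsCounterVal f0 n k w v`: `w` is a `k`-counter of length `n` representing the
number `v`. -/
def IsCounterVal (f0 n : ℕ) : ℕ → List ℕ → ℕ → Prop
  | 0, _, _ => False
  | 1, w, v => w.length = f0 * n ∧ (∀ l ∈ w, l ∈ sigmaAlph 1) ∧ v = bitsVal w
  | k + 2, w, v =>
      ∃ ds : List ℕ,
        SeqDesc (fun i σ => IsCounterVal f0 n (k + 1) σ i) (· ∈ sigmaAlph (k + 2)) 0
          (tower (k + 1) (f0 * n) - 1) w ds ∧ v = bitsVal ds

/-- `w` is a `(k, f0·n, p)`-description over the alphabet `Δ`. -/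
def IsDescription (f0 n k p : ℕ) (Δ : Finset ℕ) (w : List ℕ) : Prop :=
  2 ≤ k ∧ ∃ ds : List ℕ,
    SeqDesc (fun i σ => IsCounterVal f0 n (k - 1) σ i) (· ∈ Δ) p
      (tower k (f0 * (n - 1)) - 1) w ds

/-- Projection of a word onto a subalphabet. -/
def proj (S : Finset ℕ) (l : List ℕ) : List ℕ := l.filter (fun a => decide (a ∈ S))

/-- The letter `c` occurs exactly once in `l`, namely at the first position. -/
def FirstOnly (c : ℕ) (l : List ℕ) : Prop := ∃ l', l = c :: l' ∧ c ∉ l'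

/-- The letter `c` occurs exactly once in `l`, namely at the last position. -/
def LastOnly (c : ℕ) (l : List ℕ) : Prop := ∃ l', l = l' ++ [c] ∧ c ∉ l'

/-! ## First-order logic over the vocabulary τ -/

abbrev GPath (G : DataGraph) := {ρ : RawPath // G.IsPath ρ}
abbrev RegVal (G : DataGraph) (k : ℕ) := {lam : RAsg // ValidAsg G k lam}

theorem botValid (G : DataGraph) (k : ℕ) : ValidAsg G k botAsg :=
  ⟨fun _ _ => rfl, fun _ d h => by simp [botAsg] at h⟩

/-- The common domain: nodes, paths and `k`-tuples of register values of `G`. -/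
def TDom (G : DataGraph) (k : ℕ) : Type := Fin G.n ⊕ (GPath G ⊕ RegVal G k)

/-- Membership in the structure determined by a set `P` of paths. -/
def inTDom {G : DataGraph} {k : ℕ} (P : Set (GPath G)) : TDom G k → Prop
  | Sum.inl _ => True
  | Sum.inr (Sum.inl ρ) => ρ ∈ P
  | Sum.inr (Sum.inr _) => True

/-- First-order formulas over the vocabulary
`⟨Nodes, Paths, Registers, Endpoints, e_1, …, e_m, ⊥̄⟩`; variables are naturals. -/
inductive FOF (m : ℕ) where
  | eq (x y : ℕ)
  | nodes (x : ℕ)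
  | paths (x : ℕ)
  | registers (x : ℕ)
  | endpoints (x y z : ℕ)
  | erel (i : Fin m) (x y z : ℕ)
  | isBot (x : ℕ)
  | not (φ : FOF m)
  | or (φ ψ : FOF m)
  | ex (x : ℕ) (φ : FOF m)

/-- Quantifier rank. -/
def FOF.qrank {m : ℕ} : FOF m → ℕ
  | .not φ => φ.qrank
  | .or φ ψ => max φ.qrank ψ.qrank
  | .ex _ φ => φ.qrank + 1
  | _ => 0

/-- Satisfaction over the τ-structure whose path elements are those in `P` (the
nodes and register values of `G` are always present). -/
def FOF.FSat {m : ℕ} (G : DataGraph) (k : ℕ) (es : Fin m → REM) (P : Set (GPath G)) :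
    FOF m → (ℕ → TDom G k) → Prop
  | .eq x y, α => α x = α y
  | .nodes x, α => ∃ u, α x = Sum.inl u
  | .paths x, α => ∃ ρ, ρ ∈ P ∧ α x = Sum.inr (Sum.inl ρ)
  | .registers x, α => ∃ l, α x = Sum.inr (Sum.inr l)
  | .endpoints x y z, α => ∃ (u v : Fin G.n) (ρ : GPath G), ρ ∈ P ∧
      α x = Sum.inl u ∧ α y = Sum.inr (Sum.inl ρ) ∧ α z = Sum.inl v ∧
      ρ.1.start = (u : ℕ) ∧ ρ.1.last = (v : ℕ)
  | .erel i x y z, α => ∃ (l₁ l₂ : RegVal G k) (ρ : GPath G), ρ ∈ P ∧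
      α x = Sum.inr (Sum.inr l₁) ∧ α y = Sum.inr (Sum.inl ρ) ∧
      α z = Sum.inr (Sum.inr l₂) ∧ REMSem G (es i) ρ.1 l₁.1 l₂.1
  | .isBot x, α => α x = Sum.inr (Sum.inr ⟨botAsg, botValid G k⟩)
  | .not φ, α => ¬ FOF.FSat G k es P φ α
  | .or φ ψ, α => FOF.FSat G k es P φ α ∨ FOF.FSat G k es P ψ α
  | .ex x φ, α => ∃ d : TDom G k, inTDom P d ∧ FOF.FSat G k es P φ (Function.update α x d)

/-- The path `ρ` satisfies the type `E` (relative to the REMs `es`). -/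
def SatType {m : ℕ} (G : DataGraph) (k : ℕ) (es : Fin m → REM) (ρ : RawPath)
    (E : Set (Fin m × RegVal G k × RegVal G k)) : Prop :=
  ∀ (i : Fin m) (l₁ l₂ : RegVal G k), REMSem G (es i) ρ l₁.1 l₂.1 ↔ (i, l₁, l₂) ∈ E
/-! ## Further auxiliary notions used in the statements -/

/-- PSPACE-hardness (w.r.t. polynomial-time reductions). -/
def PSpaceHard (L : Lang) : Prop := ∀ L' : Lang, InPSpace L' → ReducesTo L' L

/-- A Boolean query on graph databases over `{0, …, s-1}` is definable in WL. -/
def DefinableWL (s : ℕ) (Q : Set DataGraph) : Prop :=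
  ∃ φ : WL, WL.Closed φ ∧ (∀ a ∈ WL.labels φ, a < s) ∧
    ∀ G : DataGraph, G.WF s → G.IsDB → (G ∈ Q ↔ WL.holds G φ)

/-- A Boolean query on graph databases over `{0, …, s-1}` is definable in RL. -/
def DefinableRL (s : ℕ) (Q : Set DataGraph) : Prop :=
  ∃ (k : ℕ) (φ : RL), RL.ClosedF φ ∧ (∀ a ∈ RL.labels φ, a < s) ∧
    ∀ G : DataGraph, G.WF s → G.IsDB → (G ∈ Q ↔ RL.holds G k φ)

/-- Assignment of the path `ρ` to the path variable `0`. -/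
def asg1 (ρ : RawPath) : ℕ → RawPath :=
  Function.update (fun _ => (⟨0, []⟩ : RawPath)) 0 ρ

/-- Assignment of `ρ`, `ρ'` to the path variables `0`, `1`. -/
def asg2 (ρ ρ' : RawPath) : ℕ → RawPath := Function.update (asg1 ρ) 1 ρ'

/-- Default assignment for position variables. -/
def posDefault : ℕ × ℕ → ℕ := fun _ => 0

/-- The `Γ_k`-projection of the label of `ρ` is a `k`-counter encoding the number `v`. -/
def EncodesVal (f0 n k : ℕ) (ρ : RawPath) (v : ℕ) : Prop :=
  IsCounterVal f0 n k (proj (gammaAlph k) ρ.label) v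

/-- The assignment sending the first variables to the parameter tuples
`vbar`, `ρbar`, `lbar` (and all remaining variables to `⊥̄`). -/
def paramAsg (G : DataGraph) (k : ℕ) {a b c : ℕ} (vbar : Fin a → Fin G.n)
    (ρbar : Fin b → GPath G) (lbar : Fin c → RegVal G k) : ℕ → TDom G k := fun x =>
  if h : x < a then Sum.inl (vbar ⟨x, h⟩)
  else if h2 : x < a + b then Sum.inr (Sum.inl (ρbar ⟨x - a, by omega⟩))
  else if h3 : x < a + b + c then Sum.inr (Sum.inr (lbar ⟨x - a - b, by omega⟩))
  else Sum.inr (Sum.inr ⟨botAsg, botValid G k⟩)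

/-- Encoding of an instance of the "`i` distinct paths of a given type" problem. -/
def encInst6 (G : DataGraph) (es : List REM) (u v : ℕ)
    (El : List (ℕ × List ℕ × List ℕ)) (i : ℕ) : List ℕ :=
  encBlock (encodeGraph G) ++ encBlock (encListL encREM es) ++ [u, v, i] ++
    encBlock (encListL (fun t => t.1 :: (encBlock t.2.1 ++ encBlock t.2.2)) El)

/-- `ρ` satisfies the (list-coded) type `El` relative to the (list-coded) REMs `es`:
for every `e ∈ es` and all valid register values `lam`, `lam'`,
`(ρ.start, lam, ρ, ρ.last, lam') ∈ ⟦e⟧_G` exactly when the triple is listed in `El`. -/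
def SatTypeList (G : DataGraph) (k : ℕ) (es : List REM) (ρ : RawPath)
    (El : List (ℕ × List ℕ × List ℕ)) : Prop :=
  ∀ idx, idx < es.length → ∀ lam lam' : RAsg, ValidAsg G k lam → ValidAsg G k lam' →
    (REMSem G (es.getD idx .eps) ρ lam lam' ↔
      ∃ t ∈ El, t.1 = idx ∧ regOfList t.2.1 = lam ∧ regOfList t.2.2 = lam')

/-! The duplicator maintains a finite set `S` of paths of `M_G` and an injection `F` of `S`
into `P'` that preserves the type of a path (endpoints together with the triples
`(eᵢ, λ, λ')` it satisfies); nodes and register values are answered by themselves, and with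
`r` rounds left `|S| + r ≤ k' + |ρ̄|`. Inside each type class `F` is a bijection between the
members of `S` and of `F(S)`, so a class is contained in `S` iff it is contained in `F(S)`.
Hence a path of `P'` outside `F(S)` has a partner of its type outside `S`, and a path outside
`S` has a partner in `P'` outside `F(S)`: either its whole class lies in `P'`, or the class
has at least `k' + |ρ̄| > |S|` members in `P'`. Starting from `S = ρ̄` and `F = id`, every
formula of quantifier rank at most `k'` is evaluated alike in both structures. -/

theorem Set.eqOn_update_of_notMem {α β : Type*} [DecidableEq α] {f : α → β} {s : Set α}
    {a : α} {b : β} (ha : a ∉ s) : Set.EqOn (Function.update f a b) f s :=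
  fun _ hx => Function.update_of_ne (ne_of_mem_of_not_mem hx ha) _ _

section Fibers

variable {α β : Type*} {τ : α → β} {S : Finset α} {F : α → α}

theorem card_filter_image_eq_card_filter [DecidableEq α] [DecidableEq β] (hinj : Set.InjOn F S)
    (hτ : ∀ s ∈ S, τ (F s) = τ s) (t : β) :
    ((S.image F).filter (τ · = t)).card = (S.filter (τ · = t)).card := by
  rw [Finset.filter_image,
    Finset.card_image_of_injOn (hinj.mono (Finset.coe_subset.2 (Finset.filter_subset _ _)))]
  exact congrArg Finset.card (Finset.filter_congr fun s hs => by rw [hτ s hs])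

theorem preimage_subset_iff_preimage_subset_image (hinj : Set.InjOn F S)
    (hτ : ∀ s ∈ S, τ (F s) = τ s) (t : β) :
    τ ⁻¹' {t} ⊆ S ↔ τ ⁻¹' {t} ⊆ F '' S := by
  classical
  have hcard := card_filter_image_eq_card_filter hinj hτ t
  constructor
  · intro h x hx
    have hsub : (S.image F).filter (τ · = t) ⊆ S.filter (τ · = t) := by
      intro y hy
      simp only [Finset.mem_filter] at hy ⊢
      exact ⟨h hy.2, hy.2⟩
    have hx' : x ∈ S.filter (τ · = t) := Finset.mem_filter.mpr ⟨h hx, hx⟩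
    rw [← Finset.eq_of_subset_of_card_le hsub hcard.ge] at hx'
    simpa using (Finset.mem_filter.mp hx').1
  · intro h x hx
    have hsub : S.filter (τ · = t) ⊆ (S.image F).filter (τ · = t) := by
      intro y hy
      simp only [Finset.mem_filter] at hy ⊢
      exact ⟨by simpa using h hy.2, hy.2⟩
    have hx' : x ∈ (S.image F).filter (τ · = t) :=
      Finset.mem_filter.mpr ⟨by simpa using h hx, hx⟩
    rw [← Finset.eq_of_subset_of_card_le hsub hcard.le] at hx'
    exact (Finset.mem_filter.mp hx').1

theorem exists_mem_preimage_notMem_image {P : Set α} (hinj : Set.InjOn F S)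
    (hτ : ∀ s ∈ S, τ (F s) = τ s) {x : α} (hx : x ∉ S)
    (hP : (S.card : ℕ∞) < (P ∩ τ ⁻¹' {τ x}).encard ∨ τ ⁻¹' {τ x} ⊆ P) :
    ∃ y ∈ P, τ y = τ x ∧ y ∉ F '' S := by
  rcases hP with hlt | hsub
  · have hle : (F '' S).encard ≤ S.card :=
      (Set.encard_image_le F S).trans (Set.encard_coe_eq_coe_finsetCard S).le
    obtain ⟨y, ⟨hyP, hyτ⟩, hyF⟩ := Set.not_subset.mp fun h =>
      ((Set.encard_le_encard h).trans hle).not_gt hlt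
    exact ⟨y, hyP, hyτ, hyF⟩
  · by_contra! h
    have himage : τ ⁻¹' {τ x} ⊆ F '' S := fun y hy => h y (hsub hy) hy
    exact hx ((preimage_subset_iff_preimage_subset_image hinj hτ _).mpr himage rfl)

theorem exists_notMem_of_notMem_image (hinj : Set.InjOn F S)
    (hτ : ∀ s ∈ S, τ (F s) = τ s) {y : α} (hy : y ∉ F '' S) :
    ∃ x ∉ S, τ x = τ y := by
  by_contra! h
  have hS : τ ⁻¹' {τ y} ⊆ S := fun x hx => by_contra fun hxS => h x hxS hx
  exact hy ((preimage_subset_iff_preimage_subset_image hinj hτ _).mp hS rfl)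

end Fibers

section PathTypes

def pathType (G : DataGraph) (k : ℕ) {m : ℕ} (es : Fin m → REM) (ρ : GPath G) :
    ℕ × ℕ × Set (Fin m × RegVal G k × RegVal G k) :=
  (ρ.1.start, ρ.1.last, {t | REMSem G (es t.1) ρ.1 t.2.1.1 t.2.2.1})

def IsSaturated (G : DataGraph) (k : ℕ) {m : ℕ} (es : Fin m → REM) (P' : Set (GPath G))
    (N : ℕ) : Prop :=
  ∀ t, (N : ℕ∞) ≤ (P' ∩ pathType G k es ⁻¹' {t}).encard ∨ pathType G k es ⁻¹' {t} ⊆ P'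

structure IsPathMatching (G : DataGraph) (k : ℕ) {m : ℕ} (es : Fin m → REM)
    (P' : Set (GPath G)) (S : Finset (GPath G)) (F : GPath G → GPath G) : Prop where
  injOn : Set.InjOn F S
  mapsTo : Set.MapsTo F S P'
  pathType_eq : ∀ σ ∈ S, pathType G k es (F σ) = pathType G k es σ

variable {G : DataGraph} {k m : ℕ} {es : Fin m → REM}

theorem pathType_eq_iff {ρ : GPath G} {u v : ℕ} {E : Set (Fin m × RegVal G k × RegVal G k)} :
    pathType G k es ρ = (u, v, E) ↔ ρ.1.start = u ∧ ρ.1.last = v ∧ SatType G k es ρ.1 E := by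
  simp [pathType, SatType, Set.ext_iff]

theorem remSem_iff_of_pathType_eq {ρ ρ' : GPath G}
    (h : pathType G k es ρ = pathType G k es ρ') (i : Fin m) (l₁ l₂ : RegVal G k) :
    REMSem G (es i) ρ.1 l₁.1 l₂.1 ↔ REMSem G (es i) ρ'.1 l₁.1 l₂.1 := by
  simpa [pathType] using congrArg (fun p => (i, l₁, l₂) ∈ p.2.2) h

theorem isSaturated_of_chooser {P' : Set (GPath G)} {N : ℕ}
    (chooser : ℕ → ℕ → Set (Fin m × RegVal G k × RegVal G k) → Finset (GPath G))
    (hmem : ∀ u v E ρ, ρ ∈ chooser u v E →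
      ρ.1.start = u ∧ ρ.1.last = v ∧ SatType G k es ρ.1 E)
    (hfull : ∀ u v E, (chooser u v E).card = N ∨
      ∀ ρ : GPath G, ρ.1.start = u → ρ.1.last = v → SatType G k es ρ.1 E →
        ρ ∈ chooser u v E)
    (hP' : ∀ u v E, ↑(chooser u v E) ⊆ P') :
    IsSaturated G k es P' N := by
  rintro ⟨u, v, E⟩
  rcases hfull u v E with hcard | hall
  · refine Or.inl ?_
    calc (N : ℕ∞) = (↑(chooser u v E) : Set (GPath G)).encard := by simp [hcard]
      _ ≤ _ := Set.encard_le_encard fun ρ hρ =>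
          Set.mem_inter (hP' u v E hρ) (pathType_eq_iff.mpr (hmem u v E ρ hρ))
  · refine Or.inr fun ρ hρ => ?_
    obtain ⟨hu, hv, hE⟩ := pathType_eq_iff.mp hρ
    exact hP' u v E (hall ρ hu hv hE)

end PathTypes

namespace TDom

variable {G : DataGraph} {k : ℕ}

def mapPath (F : GPath G → GPath G) : TDom G k → TDom G k :=
  Sum.map id (Sum.map F id)

@[simp] theorem mapPath_id : mapPath (k := k) (id : GPath G → GPath G) = id := by
  funext d
  rcases d with u | σ | l <;> rfl

theorem inTDom_mono {S T : Set (GPath G)} (h : S ⊆ T) {d : TDom G k} (hd : inTDom S d) :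
    inTDom T d := by
  rcases d with u | σ | l
  exacts [trivial, h hd, trivial]

theorem inTDom_mapPath {S P : Set (GPath G)} {F : GPath G → GPath G} (hF : Set.MapsTo F S P)
    {d : TDom G k} (hd : inTDom S d) : inTDom P (mapPath F d) := by
  rcases d with u | σ | l
  exacts [trivial, hF hd, trivial]

theorem mapPath_congr {S : Set (GPath G)} {F F' : GPath G → GPath G} (h : Set.EqOn F' F S)
    {d : TDom G k} (hd : inTDom S d) : mapPath F' d = mapPath F d := by
  rcases d with u | σ | l
  · rfl
  · exact congrArg (fun σ => Sum.inr (Sum.inl σ)) (h hd)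
  · rfl

theorem mapPath_inj {S : Set (GPath G)} {F : GPath G → GPath G} (hF : Set.InjOn F S)
    {d d' : TDom G k} (hd : inTDom S d) (hd' : inTDom S d') :
    mapPath F d = mapPath F d' ↔ d = d' := by
  refine ⟨fun h => ?_, congrArg _⟩
  unfold TDom at d d' h ⊢
  rcases d with u | σ | l <;> rcases d' with u' | σ' | l' <;>
    simp_all [mapPath, inTDom, hF.eq_iff]

theorem mapPath_comp_update {S : Set (GPath G)} {F F' : GPath G → GPath G}
    (h : Set.EqOn F' F S) {α : ℕ → TDom G k} (hα : ∀ y, inTDom S (α y)) (x : ℕ)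
    (d : TDom G k) :
    mapPath F' ∘ Function.update α x d = Function.update (mapPath F ∘ α) x (mapPath F' d) := by
  funext y
  by_cases hy : y = x
  · subst hy; simp
  · simp [Function.update_of_ne hy, mapPath_congr h (hα y)]

theorem forall_inTDom_update {S S' : Set (GPath G)} (h : S ⊆ S')
    {α : ℕ → TDom G k} (hα : ∀ y, inTDom S (α y)) {x : ℕ} {d : TDom G k}
    (hd : inTDom S' d) : ∀ y, inTDom S' (Function.update α x d y) := by
  intro y
  by_cases hy : y = x
  · subst hy; simpa using hd
  · simpa [Function.update_of_ne hy] using inTDom_mono h (hα y)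

end TDom

namespace IsPathMatching

variable {G : DataGraph} {k m : ℕ} {es : Fin m → REM} {P' : Set (GPath G)}
  {S : Finset (GPath G)} {F : GPath G → GPath G} {σ : GPath G}

theorem start_eq (hF : IsPathMatching G k es P' S F) (hσ : σ ∈ S) :
    (F σ).1.start = σ.1.start :=
  congrArg Prod.fst (hF.pathType_eq σ hσ)

theorem last_eq (hF : IsPathMatching G k es P' S F) (hσ : σ ∈ S) :
    (F σ).1.last = σ.1.last :=
  congrArg (·.2.1) (hF.pathType_eq σ hσ)

theorem remSem_iff (hF : IsPathMatching G k es P' S F) (hσ : σ ∈ S) (i : Fin m)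
    (l₁ l₂ : RegVal G k) : REMSem G (es i) (F σ).1 l₁.1 l₂.1 ↔ REMSem G (es i) σ.1 l₁.1 l₂.1 :=
  remSem_iff_of_pathType_eq (hF.pathType_eq σ hσ) i l₁ l₂

theorem insert_update (hF : IsPathMatching G k es P' S F) {ρ : GPath G}
    (hσ : σ ∉ S) (hρP : ρ ∈ P') (hρ : pathType G k es ρ = pathType G k es σ)
    (hρS : ρ ∉ F '' S) :
    IsPathMatching G k es P' (insert σ S) (Function.update F σ ρ) := by
  have heq : Set.EqOn (Function.update F σ ρ) F S := Set.eqOn_update_of_notMem hσ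
  refine ⟨?_, ?_, ?_⟩
  · rw [Finset.coe_insert, Set.injOn_insert (by exact_mod_cast hσ), heq.image_eq]
    exact ⟨hF.injOn.congr heq.symm, by simpa using hρS⟩
  · intro s hs
    rcases Finset.mem_insert.mp hs with rfl | hs
    · simpa using hρP
    · rw [heq hs]; exact hF.mapsTo hs
  · simp only [Finset.forall_mem_insert, Function.update_self]
    exact ⟨hρ, fun s hs => by rw [heq hs]; exact hF.pathType_eq s hs⟩

theorem exists_extend_forth {N : ℕ} (hsat : IsSaturated G k es P' N)
    (hF : IsPathMatching G k es P' S F) (hS : S.card < N) (σ : GPath G) :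
    ∃ F', IsPathMatching G k es P' (insert σ S) F' ∧ Set.EqOn F' F S := by
  by_cases hσ : σ ∈ S
  · exact ⟨F, by rwa [Finset.insert_eq_of_mem hσ], Set.eqOn_refl F S⟩
  obtain ⟨ρ, hρP, hρ, hρS⟩ := exists_mem_preimage_notMem_image hF.injOn hF.pathType_eq hσ
    ((hsat _).imp_left (lt_of_lt_of_le (by exact_mod_cast hS)))
  exact ⟨_, hF.insert_update hσ hρP hρ hρS, Set.eqOn_update_of_notMem hσ⟩

theorem exists_extend_back (hF : IsPathMatching G k es P' S F) {ρ : GPath G} (hρ : ρ ∈ P') :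
    ∃ σ F', IsPathMatching G k es P' (insert σ S) F' ∧ Set.EqOn F' F S ∧ F' σ = ρ := by
  by_cases hρS : ρ ∈ F '' S
  · obtain ⟨σ, hσ, rfl⟩ := hρS
    exact ⟨σ, F, by rwa [Finset.insert_eq_of_mem hσ], Set.eqOn_refl F S, rfl⟩
  obtain ⟨σ, hσ, hσρ⟩ := exists_notMem_of_notMem_image hF.injOn hF.pathType_eq hρS
  exact ⟨σ, _, hF.insert_update hσ hρ hσρ.symm hρS, Set.eqOn_update_of_notMem hσ,
    Function.update_self _ _ _⟩

theorem exists_extend_forth_tdom {N : ℕ} (hsat : IsSaturated G k es P' N)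
    (hF : IsPathMatching G k es P' S F) (hS : S.card < N) (d : TDom G k) :
    ∃ S' F', IsPathMatching G k es P' S' F' ∧ S ⊆ S' ∧ S'.card ≤ S.card + 1 ∧
      Set.EqOn F' F S ∧ inTDom (S' : Set (GPath G)) d := by
  rcases d with u | σ | l
  · exact ⟨S, F, hF, subset_rfl, by omega, Set.eqOn_refl F S, trivial⟩
  · obtain ⟨F', hF', heq⟩ := hF.exists_extend_forth hsat hS σ
    exact ⟨_, F', hF', Finset.subset_insert σ S, Finset.card_insert_le σ S, heq,
      Finset.mem_insert_self σ S⟩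
  · exact ⟨S, F, hF, subset_rfl, by omega, Set.eqOn_refl F S, trivial⟩

theorem exists_extend_back_tdom (hF : IsPathMatching G k es P' S F) {d' : TDom G k}
    (hd' : inTDom P' d') :
    ∃ d S' F', IsPathMatching G k es P' S' F' ∧ S ⊆ S' ∧ S'.card ≤ S.card + 1 ∧
      Set.EqOn F' F S ∧ inTDom (S' : Set (GPath G)) d ∧ TDom.mapPath F' d = d' := by
  rcases d' with u | ρ | l
  · exact ⟨Sum.inl u, S, F, hF, subset_rfl, by omega, Set.eqOn_refl F S, trivial, rfl⟩
  · obtain ⟨σ, F', hF', heq, rfl⟩ := hF.exists_extend_back hd'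
    exact ⟨Sum.inr (Sum.inl σ), _, F', hF', Finset.subset_insert σ S,
      Finset.card_insert_le σ S, heq, Finset.mem_insert_self σ S, rfl⟩
  · exact ⟨Sum.inr (Sum.inr l), S, F, hF, subset_rfl, by omega, Set.eqOn_refl F S, trivial, rfl⟩

end IsPathMatching

section Game

variable {G : DataGraph} {k m : ℕ} {es : Fin m → REM} {P' : Set (GPath G)}

theorem fsat_univ_iff_fsat_mapPath {N : ℕ} (hsat : IsSaturated G k es P' N) (φ : FOF m) {r : ℕ}
    {S : Finset (GPath G)} {F : GPath G → GPath G} {α : ℕ → TDom G k}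
    (hφ : φ.qrank ≤ r) (hr : S.card + r ≤ N) (hF : IsPathMatching G k es P' S F)
    (hα : ∀ x, inTDom (S : Set (GPath G)) (α x)) :
    FOF.FSat G k es Set.univ φ α ↔ FOF.FSat G k es P' φ (TDom.mapPath F ∘ α) := by
  induction φ generalizing r S F α with
  | eq x y => exact (TDom.mapPath_inj hF.injOn (hα x) (hα y)).symm
  | nodes x | paths x | registers x | isBot x =>
    simp only [FOF.FSat, Function.comp_apply]
    have hx := hα x
    generalize α x = d at hx ⊢
    unfold TDom at d ⊢
    rcases d with u | σ | l
    · simp [TDom.mapPath]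
    · simp [TDom.mapPath, hF.mapsTo hx]
    · simp [TDom.mapPath]
  | endpoints x y z | erel _ x y z =>
    simp only [FOF.FSat, Function.comp_apply]
    have hy := hα y
    generalize α x = dx, α y = dy, α z = dz at hy ⊢
    unfold TDom at dx dy dz ⊢
    rcases dy with u | σ | l
    · simp [TDom.mapPath]
    · rcases dx with u | σ' | l <;> rcases dz with u' | σ'' | l' <;>
        simp [TDom.mapPath, -Subtype.exists, hF.mapsTo hy, hF.start_eq hy, hF.last_eq hy,
          hF.remSem_iff hy]
    · simp [TDom.mapPath]
  | not φ ih => exact not_congr (ih hφ hr hF hα)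
  | or φ ψ ihφ ihψ =>
    exact or_congr (ihφ (le_of_max_le_left hφ) hr hF hα) (ihψ (le_of_max_le_right hφ) hr hF hα)
  | ex x φ ih =>
    have hφ' : φ.qrank ≤ r - 1 := by simp only [FOF.qrank] at hφ; omega
    have hS : S.card < N := by simp only [FOF.qrank] at hφ; omega
    simp only [FOF.FSat]
    constructor
    · rintro ⟨d, -, hd⟩
      obtain ⟨S', F', hF', hSS', hcard, heq, hd'⟩ := hF.exists_extend_forth_tdom hsat hS d
      refine ⟨TDom.mapPath F' d, TDom.inTDom_mapPath hF'.mapsTo hd', ?_⟩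
      rw [← TDom.mapPath_comp_update heq hα]
      exact (ih hφ' (by omega) hF' (TDom.forall_inTDom_update hSS' hα hd')).mp hd
    · rintro ⟨d', hd'P, hd⟩
      obtain ⟨d, S', F', hF', hSS', hcard, heq, hd', rfl⟩ := hF.exists_extend_back_tdom hd'P
      refine ⟨d, TDom.inTDom_mono (Set.subset_univ _) hd', ?_⟩
      rw [← TDom.mapPath_comp_update heq hα] at hd
      exact (ih hφ' (by omega) hF' (TDom.forall_inTDom_update hSS' hα hd')).mpr hd

end Game

theorem inTDom_range_paramAsg {G : DataGraph} {k a b c : ℕ} (vbar : Fin a → Fin G.n)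
    (ρbar : Fin b → GPath G) (lbar : Fin c → RegVal G k) (x : ℕ) :
    inTDom (Set.range ρbar) (paramAsg G k vbar ρbar lbar x) := by
  unfold paramAsg TDom
  split_ifs
  exacts [trivial, ⟨_, rfl⟩, trivial, trivial]

theorem fo_structures_qrank_equivalent_general
    (G : DataGraph) (k m k' : ℕ) (es : Fin m → REM)
    (a b c : ℕ) (vbar : Fin a → Fin G.n) (ρbar : Fin b → GPath G)
    (lbar : Fin c → RegVal G k)
    (chooser : ℕ → ℕ → Set (Fin m × RegVal G k × RegVal G k) → Finset (GPath G))
    (hmem : ∀ u v E ρ, ρ ∈ chooser u v E →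
      ρ.1.start = u ∧ ρ.1.last = v ∧ SatType G k es ρ.1 E)
    (hfull : ∀ u v E, (chooser u v E).card = k' + b ∨
      ∀ ρ : GPath G, ρ.1.start = u → ρ.1.last = v → SatType G k es ρ.1 E →
        ρ ∈ chooser u v E)
    (P' : Set (GPath G))
    (hP' : P' = Set.range ρbar ∪
      ⋃ (u : ℕ) (v : ℕ) (E : Set (Fin m × RegVal G k × RegVal G k)),
        ↑(chooser u v E)) :
    ∀ φ : FOF m, FOF.qrank φ ≤ k' →
      (FOF.FSat G k es Set.univ φ (paramAsg G k vbar ρbar lbar) ↔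
       FOF.FSat G k es P' φ (paramAsg G k vbar ρbar lbar)) := by
  have hsat : IsSaturated G k es P' (k' + b) := by
    refine isSaturated_of_chooser chooser hmem hfull fun u v E σ hσ => ?_
    rw [hP', Set.mem_union, Set.mem_iUnion₂]
    exact Or.inr ⟨u, v, Set.mem_iUnion.2 ⟨E, hσ⟩⟩
  have hmatch : IsPathMatching G k es P' (Finset.univ.image ρbar) id := by
    refine ⟨Set.injOn_id _, fun σ hσ => ?_, fun _ _ => rfl⟩
    rw [hP']
    exact Or.inl (by simpa using hσ)
  intro φ hφ
  simpa using fsat_univ_iff_fsat_mapPath hsat φ hφ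
    (by grw [Finset.card_image_le, Finset.card_univ, Fintype.card_fin]; omega) hmatch
    (by simpa using inTDom_range_paramAsg vbar ρbar lbar)

/-- The infinite τ-structure `M_G` (over nodes, all paths, and register
values of `G`) and the finite structure `M'_{G,ρ̄}` (whose paths are those of `ρ̄`
together with, for each pair of nodes and each type `𝓔`, up to `k' + |ρ̄|` arbitrarily
chosen distinct paths of that type) satisfy exactly the same first-order formulas of
quantifier rank at most `k'` at the parameters `v̄`, `ρ̄`, `λ̄`. -/
theorem fo_structures_qrank_equivalent
    (G : DataGraph) (k m k' : ℕ) (es : Fin m → REM)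
    (a b c : ℕ) (vbar : Fin a → Fin G.n) (ρbar : Fin b → GPath G)
    (lbar : Fin c → RegVal G k)
    (chooser : ℕ → ℕ → Set (Fin m × RegVal G k × RegVal G k) → Finset (GPath G))
    (hmem : ∀ u v E ρ, ρ ∈ chooser u v E →
      ρ.1.start = u ∧ ρ.1.last = v ∧ SatType G k es ρ.1 E)
    (hcard : ∀ u v E, (chooser u v E).card ≤ k' + b)
    (hfull : ∀ u v E, (chooser u v E).card = k' + b ∨
      ∀ ρ : GPath G, ρ.1.start = u → ρ.1.last = v → SatType G k es ρ.1 E →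
        ρ ∈ chooser u v E)
    (P' : Set (GPath G))
    (hP' : P' = Set.range ρbar ∪
      ⋃ (u : ℕ) (v : ℕ) (E : Set (Fin m × RegVal G k × RegVal G k)),
        ↑(chooser u v E)) :
    ∀ φ : FOF m, FOF.qrank φ ≤ k' →
      (FOF.FSat G k es Set.univ φ (paramAsg G k vbar ρbar lbar) ↔
       FOF.FSat G k es P' φ (paramAsg G k vbar ρbar lbar)) :=
  fo_structures_qrank_equivalent_general G k m k' es a b c vbar ρbar lbar chooser hmem hfull P' hP'
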